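/- Two-machine feasibility characterization: let E = {J_1,…,J_{k'}} be a set of jobs of a two-machine JIT flow-shop instance whose due dates are pairwise distinct and numbered so that d_1 < d_2 < … < d_{k'}, and set d_0 = 0. Then E is feasible if and only if for every i ∈ {1,…,k'}: max(Σ_{l=1}^{i} p^(1)_l, d_{i−1}) + p^(2)_i ≤ d_i. -/

import Mathlib

open Finset

/-- A just-in-time flow-shop instance on `m` machines with jobs of type `J`:
`p i j` is the (positive integer) processing time of job `j` on machine `i`,
`d j` its positive integer due date and `w j` its positive integer weight. -/
structure JITInstance (m : ℕ) (J : Type) where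
  p : Fin m → J → ℕ
  d : J → ℕ
  w : J → ℕ
  p_pos : ∀ i j, 0 < p i j
  d_pos : ∀ j, 0 < d j
  w_pos : ∀ j, 0 < w j

/-- `S` is a JIT schedule of the job set `E`: on every machine the processing
intervals `(S i j, S i j + p i j]` of distinct jobs of `E` are pairwise disjoint,
each job's operation on machine `i+1` starts no earlier than its completion on
machine `i`, and every job of `E` completes on the last machine exactly at its
due date.  (Start times are nonnegative automatically, being naturals.) -/
def IsJITSchedule {m : ℕ} {J : Type} (I : JITInstance m J)
    (E : Finset J) (S : Fin m → J → ℕ) : Prop :=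
  (∀ i : Fin m, ∀ j ∈ E, ∀ j' ∈ E, j ≠ j' →
      S i j + I.p i j ≤ S i j' ∨ S i j' + I.p i j' ≤ S i j) ∧
  (∀ j ∈ E, ∀ i i' : Fin m, i'.val = i.val + 1 →
      S i j + I.p i j ≤ S i' j) ∧
  (∀ j ∈ E, ∀ i : Fin m, i.val = m - 1 →
      S i j + I.p i j = I.d j)

/-- A job set is feasible if it admits a JIT schedule. -/
def Feasible {m : ℕ} {J : Type} (I : JITInstance m J) (E : Finset J) : Prop :=
  ∃ S : Fin m → J → ℕ, IsJITSchedule I E S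

/-!
On the second machine the jobs occupy disjoint intervals ending at their due dates, so job `i`
starts there after `d_{i-1}`; on the first machine the jobs `1, …, i` must all be processed in
disjoint intervals inside `[0, S²_i]`, so their total length is at most `S²_i = d_i - p²_i`.
Conversely, if the inequalities hold, processing the jobs back to back on the first machine in
due-date order and just in time on the second one is a JIT schedule.
-/

lemma Finset.sum_le_of_pairwiseDisjoint_Ioc {α : Type*} (s : Finset α) (S p : α → ℕ) (T : ℕ)
    (hdisj : (s : Set α).PairwiseDisjoint fun a => Ioc (S a) (S a + p a))
    (hT : ∀ a ∈ s, S a + p a ≤ T) :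
    ∑ a ∈ s, p a ≤ T :=
  calc ∑ a ∈ s, p a = ∑ a ∈ s, #(Ioc (S a) (S a + p a)) := by simp
    _ = #(s.biUnion fun a => Ioc (S a) (S a + p a)) := (card_biUnion hdisj).symm
    _ ≤ #(Ioc 0 T) :=
      card_le_card <| biUnion_subset.2 fun a ha => Ioc_subset_Ioc (Nat.zero_le _) (hT a ha)
    _ = T := by simp

lemma Finset.disjoint_Ioc_of_add_le_or_add_le {a b p q : ℕ} (h : a + p ≤ b ∨ b + q ≤ a) :
    Disjoint (Ioc a (a + p)) (Ioc b (b + q)) :=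
  h.elim Ioc_disjoint_Ioc_of_le fun h => (Ioc_disjoint_Ioc_of_le h).symm

namespace JITInstance

variable {J : Type} {k' : ℕ} (I : JITInstance 2 J) (e : Fin k' ↪ J)

def prevDue (i : Fin k') : ℕ :=
  if i.val = 0 then 0 else I.d (e ⟨i.val - 1, lt_of_le_of_lt (Nat.sub_le _ _) i.isLt⟩)

variable {I e}

lemma prevDue_le_iff (hmono : Monotone fun l => I.d (e l)) {i : Fin k'} {x : ℕ} :
    I.prevDue e i ≤ x ↔ ∀ l < i, I.d (e l) ≤ x := by
  unfold prevDue
  split_ifs with hi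
  · exact iff_of_true (Nat.zero_le x) fun l hl => absurd (Fin.lt_def.1 hl) (by omega)
  · refine ⟨fun hx l hl => (hmono ?_).trans hx, fun H => H _ ?_⟩
    · rw [Fin.le_def]; rw [Fin.lt_def] at hl; simp only; omega
    · rw [Fin.lt_def]; simp only; omega

end JITInstance

section Necessity

open JITInstance

variable {J : Type} {k' : ℕ} {I : JITInstance 2 J} {e : Fin k' ↪ J}
variable {S : Fin 2 → J → ℕ} (hS : IsJITSchedule I (univ.map e) S)
include hS

lemma IsJITSchedule.completion_eq_due (l : Fin k') : S 1 (e l) + I.p 1 (e l) = I.d (e l) :=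
  hS.2.2 _ (mem_map_of_mem _ (mem_univ l)) 1 rfl

lemma IsJITSchedule.due_le_start (hmono : StrictMono fun l => I.d (e l)) {l i : Fin k'}
    (hl : l < i) : I.d (e l) ≤ S 1 (e i) := by
  have hlt : I.d (e l) < I.d (e i) := hmono hl
  have hpos := I.p_pos 1 (e l)
  have hl' := hS.completion_eq_due l
  have hi' := hS.completion_eq_due i
  rcases hS.1 1 (e l) (mem_map_of_mem _ (mem_univ l)) (e i) (mem_map_of_mem _ (mem_univ i))
    (e.injective.ne hl.ne) with h | h <;> omega

lemma IsJITSchedule.sum_Iic_le_start (hmono : StrictMono fun l => I.d (e l)) (i : Fin k') :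
    ∑ l ∈ Iic i, I.p 0 (e l) ≤ S 1 (e i) := by
  refine sum_le_of_pairwiseDisjoint_Ioc _ (fun l => S 0 (e l)) _ _ ?_ fun l hl => ?_
  · intro l _ l' _ hne
    exact disjoint_Ioc_of_add_le_or_add_le <| hS.1 0 (e l) (mem_map_of_mem _ (mem_univ l))
      (e l') (mem_map_of_mem _ (mem_univ l')) (e.injective.ne hne)
  have hprec := hS.2.1 (e l) (mem_map_of_mem _ (mem_univ l)) 0 1 rfl
  rcases (mem_Iic.1 hl).lt_or_eq with hlt | rfl
  · have := hS.completion_eq_due l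
    have := hS.due_le_start hmono hlt
    omega
  · exact hprec

lemma IsJITSchedule.max_add_le_due (hmono : StrictMono fun l => I.d (e l)) (i : Fin k') :
    max (∑ l ∈ Iic i, I.p 0 (e l)) (I.prevDue e i) + I.p 1 (e i) ≤ I.d (e i) := by
  rw [← hS.completion_eq_due i, add_le_add_iff_right, max_le_iff]
  exact ⟨hS.sum_Iic_le_start hmono i,
    (prevDue_le_iff hmono.monotone).2 fun _ => hS.due_le_start hmono⟩

end Necessity

namespace JITInstance

variable {J : Type} {k' : ℕ} {I : JITInstance 2 J} {e : Fin k' ↪ J}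

variable (I e) in
noncomputable def canonicalSchedule : Fin 2 → J → ℕ :=
  ![Function.extend e (fun l => ∑ t ∈ Iio l, I.p 0 (e t)) 0,
    Function.extend e (fun l => I.d (e l) - I.p 1 (e l)) 0]

lemma canonicalSchedule_zero (l : Fin k') :
    canonicalSchedule I e 0 (e l) = ∑ t ∈ Iio l, I.p 0 (e t) := by
  simp [canonicalSchedule, e.injective.extend_apply]

lemma canonicalSchedule_one (l : Fin k') :
    canonicalSchedule I e 1 (e l) = I.d (e l) - I.p 1 (e l) := by
  simp [canonicalSchedule, e.injective.extend_apply]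

lemma isJITSchedule_canonicalSchedule (hmono : Monotone fun l => I.d (e l))
    (h : ∀ i, max (∑ l ∈ Iic i, I.p 0 (e l)) (I.prevDue e i) + I.p 1 (e i) ≤ I.d (e i)) :
    IsJITSchedule I (univ.map e) (canonicalSchedule I e) := by
  have hsum i : ∑ l ∈ Iic i, I.p 0 (e l) + I.p 1 (e i) ≤ I.d (e i) := by
    have := h i; omega
  have hprev i : I.prevDue e i + I.p 1 (e i) ≤ I.d (e i) := by
    have := h i; omega
  have hordered : ∀ m : Fin 2, ∀ l l' : Fin k', l < l' →
      canonicalSchedule I e m (e l) + I.p m (e l) ≤ canonicalSchedule I e m (e l') := by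
    intro m l l' hl
    fin_cases m
    · simp only [Fin.zero_eta, canonicalSchedule_zero]
      rw [sum_Iio_add_eq_sum_Iic]
      exact sum_le_sum_of_subset fun t ht => mem_Iio.2 ((mem_Iic.1 ht).trans_lt hl)
    · simp only [Fin.mk_one, canonicalSchedule_one]
      have := (prevDue_le_iff hmono).1 le_rfl l hl
      have := hprev l'
      have := hsum l
      omega
  simp only [IsJITSchedule, forall_mem_map, mem_univ, forall_const]
  refine ⟨fun m l l' hne => ?_, fun l m m' hm => ?_, fun l m hm => ?_⟩
  · rcases lt_or_gt_of_ne (fun h => hne (congrArg e h)) with hl | hl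
    · exact Or.inl (hordered m l l' hl)
    · exact Or.inr (hordered m l' l hl)
  · obtain rfl : m = 0 := by omega
    obtain rfl : m' = 1 := by omega
    rw [canonicalSchedule_zero, canonicalSchedule_one]
    have := hsum l
    rw [← sum_Iio_add_eq_sum_Iic] at this
    omega
  · obtain rfl : m = 1 := by omega
    rw [canonicalSchedule_one]
    have := hsum l
    omega

end JITInstance

theorem jit_two_machines_feasibility_iff {J : Type} {k' : ℕ}
    (I : JITInstance 2 J) (e : Fin k' ↪ J)
    (hmono : StrictMono fun l => I.d (e l)) :
    Feasible I (Finset.univ.map e) ↔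
      ∀ i : Fin k',
        max (∑ l ∈ Finset.Iic i, I.p 0 (e l))
            (if i.val = 0 then 0
             else I.d (e ⟨i.val - 1, lt_of_le_of_lt (Nat.sub_le _ _) i.isLt⟩))
          + I.p 1 (e i) ≤ I.d (e i) :=
  ⟨fun ⟨_, hS⟩ => hS.max_add_le_due hmono,
    fun h => ⟨_, JITInstance.isJITSchedule_canonicalSchedule hmono.monotone h⟩⟩
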